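/- arXiv:2512.08823 — 3 statements merged into one kernel-verified Lean document; each statement's English description precedes it below -/
import Mathlib

section
/- Let F : ℝ → ℝ be strictly increasing, let μ1, μ2 ∈ ℝ, let σ1 > σ2 > 0, set F_i(x) = F((x − μ_i)/σ_i), and set 𝖠 = μ2 + (μ1 − μ2)/(1 − σ1/σ2). Then F2(A) ≤ F1(A) for every A ≤ 𝖠, and F1(A) ≤ F2(A) for every A ≥ 𝖠. (That is, X1 ⪯ X2 on 𝒜 = (−∞, 𝖠] and X2 ⪯ X1 on the complement [𝖠, ∞).) -/
/-- Case `σ1 > σ2`: with `F` strictly increasing, `Fᵢ x = F ((x - μᵢ)/σᵢ)` and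
`Astar = μ2 + (μ1 - μ2)/(1 - σ1/σ2)`, we have `F2 A ≤ F1 A` for every `A ≤ Astar`
(`X1 ⪯ X2` on `(-∞, Astar]`) and `F1 A ≤ F2 A` for every `A ≥ Astar`
(`X2 ⪯ X1` on `[Astar, ∞)`). -/
theorem stmt4 (F : ℝ → ℝ) (hF : StrictMono F) (μ1 μ2 σ1 σ2 : ℝ)
    (hσ2 : 0 < σ2) (hσ : σ2 < σ1)
    (F1 F2 : ℝ → ℝ) (hF1 : ∀ x, F1 x = F ((x - μ1) / σ1)) (hF2 : ∀ x, F2 x = F ((x - μ2) / σ2))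
    (Astar : ℝ) (hAstar : Astar = μ2 + (μ1 - μ2) / (1 - σ1 / σ2)) :
    (∀ A : ℝ, A ≤ Astar → F2 A ≤ F1 A) ∧ (∀ A : ℝ, Astar ≤ A → F1 A ≤ F2 A) := by
  have hσ1 : 0 < σ1 := hσ2.trans hσ
  have hd : 1 - σ1 / σ2 ≠ 0 := by
    have : σ1 / σ2 > 1 := (one_lt_div hσ2).mpr hσ
    linarith
  have hne : σ2 - σ1 ≠ 0 := by linarith
  have hA' : Astar * (σ2 - σ1) = μ1 * σ2 - μ2 * σ1 := by
    have h2 : σ2 ≠ 0 := ne_of_gt hσ2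
    have hd2 : 1 - σ1 / σ2 = (σ2 - σ1) / σ2 := by field_simp
    rw [hAstar, hd2, div_div_eq_mul_div]
    field_simp
    ring
  constructor
  · intro A hAle
    rw [hF1, hF2]
    apply hF.monotone
    rw [div_le_div_iff₀ hσ2 hσ1]
    nlinarith
  · intro A hAge
    rw [hF1, hF2]
    apply hF.monotone
    rw [div_le_div_iff₀ hσ1 hσ2]
    nlinarith
end

section
/- Let F : ℝ → ℝ be strictly increasing, let μ1, μ2 ∈ ℝ, let 0 < σ1 < σ2, set F_i(x) = F((x − μ_i)/σ_i), and set 𝖠 = μ2 + (μ1 − μ2)/(1 − σ1/σ2). Then F2(A) ≤ F1(A) for every A ≥ 𝖠, and F1(A) ≤ F2(A) for every A ≤ 𝖠. (That is, X1 ⪯ X2 on 𝒜 = [𝖠, ∞) and X2 ⪯ X1 on the complement (−∞, 𝖠].) -/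
/-- Case `σ1 < σ2`: with `F` strictly increasing, `Fᵢ x = F ((x - μᵢ)/σᵢ)` and
`Astar = μ2 + (μ1 - μ2)/(1 - σ1/σ2)`, we have `F2 A ≤ F1 A` for every `A ≥ Astar`
(`X1 ⪯ X2` on `[Astar, ∞)`) and `F1 A ≤ F2 A` for every `A ≤ Astar`
(`X2 ⪯ X1` on `(-∞, Astar]`). -/
theorem stmt5 (F : ℝ → ℝ) (hF : StrictMono F) (μ1 μ2 σ1 σ2 : ℝ)
    (hσ1 : 0 < σ1) (hσ : σ1 < σ2)
    (F1 F2 : ℝ → ℝ) (hF1 : ∀ x, F1 x = F ((x - μ1) / σ1)) (hF2 : ∀ x, F2 x = F ((x - μ2) / σ2))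
    (Astar : ℝ) (hAstar : Astar = μ2 + (μ1 - μ2) / (1 - σ1 / σ2)) :
    (∀ A : ℝ, Astar ≤ A → F2 A ≤ F1 A) ∧ (∀ A : ℝ, A ≤ Astar → F1 A ≤ F2 A) := by
  have hσ2 : (0:ℝ) < σ2 := hσ1.trans hσ
  have hd : (0:ℝ) < σ2 - σ1 := by linarith
  have hne : (1 - σ1 / σ2) ≠ 0 := by
    have : σ1 / σ2 < 1 := (div_lt_one hσ2).mpr hσ
    linarith
  have hA : Astar * (σ2 - σ1) = σ2 * μ1 - σ1 * μ2 := by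
    rw [hAstar]
    field_simp
    ring
  constructor
  · intro A hAge
    rw [hF1 A, hF2 A]
    apply hF.monotone
    rw [div_le_div_iff₀ hσ2 hσ1]
    nlinarith [mul_le_mul_of_nonneg_right hAge hd.le]
  · intro A hAle
    rw [hF1 A, hF2 A]
    apply hF.monotone
    rw [div_le_div_iff₀ hσ1 hσ2]
    nlinarith [mul_le_mul_of_nonneg_right hAle hd.le]
end

section
/- Let n1, n2 ≥ 2 be integers, σ1, σ2 > 0, and let U, V be independent with U ~ χ²_{n1−1} and V ~ χ²_{n2−1}; set s1² = σ1² U/(n1 − 1), s2² = σ2² V/(n2 − 1), and for an integer k with 0 ≤ k < n2 − 1 define Σ̂_k = Σ_{j=0}^{k} M_{j/2}^{−1} (s1/s2)^j, where M_{j/2} = ((n2 − 1)/(n1 − 1))^{j/2} Γ((n1 + j − 1)/2) Γ((n2 − j − 1)/2) / (Γ((n1 − 1)/2) Γ((n2 − 1)/2)). Then Σ̂_k is integrable and E[Σ̂_k] = Σ_{j=0}^{k} (σ1/σ2)^j = (1 − (σ1/σ2)^{k+1})/(1 − σ1/σ2) when σ1 ≠ σ2; in particular, if additionally X̄2 is an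 integrable random variable with E[X̄2] = μ2, X̄1 is integrable with E[X̄1] = μ1, and (X̄1, X̄2) is independent of (s1, s2), then Â_k = X̄2 + (X̄1 − X̄2) Σ̂_k satisfies E[Â_k] = μ2 + (μ1 − μ2)(1 − (σ1/σ2)^{k+1})/(1 − σ1/σ2). -/
open MeasureTheory ProbabilityTheory

/-- The chi-square distribution with `ν` degrees of freedom: the Gamma distribution
with shape `ν/2` and rate `1/2`. -/
noncomputable def chiSquareMeasure (ν : ℝ) : Measure ℝ :=
  gammaMeasure (ν / 2) (1 / 2)

/-!
Write `νᵢ = nᵢ - 1`. Then `s₁ / s₂ = (σ₁ / σ₂) √F` with `F = (U / ν₁) / (V / ν₂)`, and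
`E[F ^ p] = M_p` for `-ν₁/2 < p < ν₂/2`: on `x > 0`, `x ^ p` times the `Gamma(a, r)` density is
`Γ(a + p) / (Γ(a) r ^ p)` times the `Gamma(a + p, r)` density, `U` and `V` are independent, and
the common rate `1/2` cancels in `E[U ^ p] E[V ^ (-p)]`. So every term `M_{j/2}⁻¹ (s₁ / s₂) ^ j`
of `Σ̂_k` has mean `(σ₁ / σ₂) ^ j` as long as `j < ν₂`, which is what `k < n₂ - 1` guarantees,
and `E[Σ̂_k]` is a geometric sum. Since `Σ̂_k` is a function of `(s₁, s₂)`, it is independent of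
`(X̄₁, X̄₂)`, which factors `E[(X̄₁ - X̄₂) Σ̂_k]`.
-/

open Real

lemma isProbabilityMeasure_chiSquareMeasure {ν : ℝ} (hν : 0 < ν) :
    IsProbabilityMeasure (chiSquareMeasure ν) :=
  isProbabilityMeasure_gammaMeasure (half_pos hν) one_half_pos

lemma nonneg_of_sq_eq_mul_div {s σ u ν : ℝ} (hσ : 0 < σ) (hν : 0 < ν)
    (h : s ^ 2 = σ ^ 2 * u / ν) : 0 ≤ u := by
  have : u = ν * s ^ 2 / σ ^ 2 := by rw [h]; field_simp
  rw [this]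
  positivity

lemma fStatistic_rpow {u v ν₁ ν₂ : ℝ} (hu : 0 ≤ u) (hv : 0 ≤ v) (hν₁ : 0 ≤ ν₁) (hν₂ : 0 ≤ ν₂)
    (p : ℝ) : (u / ν₁ / (v / ν₂)) ^ p = (ν₂ / ν₁) ^ p * (u ^ p * v ^ (-p)) := by
  rw [div_rpow (div_nonneg hu hν₁) (div_nonneg hv hν₂), div_rpow hu hν₁, div_rpow hv hν₂,
    div_rpow hν₂ hν₁, rpow_neg hv, div_div_eq_mul_div]
  ring

lemma div_pow_eq_mul_fStatistic_rpow {s t σ τ u v ν₁ ν₂ : ℝ} (hs : 0 ≤ s) (ht : 0 ≤ t)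
    (hσ : 0 ≤ σ) (hτ : 0 ≤ τ) (hu : 0 ≤ u / ν₁) (hv : 0 ≤ v / ν₂)
    (hsu : s ^ 2 = σ ^ 2 * u / ν₁) (htv : t ^ 2 = τ ^ 2 * v / ν₂) (j : ℕ) :
    (s / t) ^ j = (σ / τ) ^ j * (u / ν₁ / (v / ν₂)) ^ ((j : ℝ) / 2) := by
  have hs' : s = σ * √(u / ν₁) := by
    rw [← sqrt_sq hs, hsu, mul_div_assoc, sqrt_mul (sq_nonneg σ), sqrt_sq hσ]
  have ht' : t = τ * √(v / ν₂) := by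
    rw [← sqrt_sq ht, htv, mul_div_assoc, sqrt_mul (sq_nonneg τ), sqrt_sq hτ]
  rw [hs', ht', mul_div_mul_comm, ← sqrt_div hu, mul_pow,
    rpow_div_two_eq_sqrt _ (div_nonneg hu hv), rpow_natCast]

lemma cast_lt_of_mem_range_succ {j k : ℕ} {x : ℝ} (hj : j ∈ Finset.range (k + 1))
    (hk : (k : ℝ) < x) : (j : ℝ) < x :=
  (Nat.cast_le.2 (Finset.mem_range_succ_iff.1 hj)).trans_lt hk

lemma geom_sum_eq_one_sub_div {K : Type*} [Field K] {x : K} (h : x ≠ 1) (n : ℕ) :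
    ∑ i ∈ Finset.range n, x ^ i = (1 - x ^ n) / (1 - x) := by
  rw [geom_sum_eq h, ← neg_div_neg_eq, neg_sub, neg_sub]

namespace ProbabilityTheory

lemma hasLaw_of_map_eq {Ω 𝓧 : Type*} [MeasurableSpace Ω] [MeasurableSpace 𝓧] {P : Measure Ω}
    {X : Ω → 𝓧} {μ : Measure 𝓧} [NeZero μ] (h : P.map X = μ) : HasLaw X μ P :=
  ⟨.of_map_ne_zero (h ▸ NeZero.ne μ), h⟩

section GammaMoments

variable {a r : ℝ}

lemma measurable_gammaPDF : Measurable (gammaPDF a r) :=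
  (measurable_gammaPDFReal a r).ennreal_ofReal

lemma integrable_gammaMeasure_iff (ha : 0 < a) (hr : 0 < r) {g : ℝ → ℝ} :
    Integrable g (gammaMeasure a r) ↔ Integrable (fun x ↦ gammaPDFReal a r x * g x) := by
  rw [gammaMeasure, integrable_withDensity_iff_integrable_smul'
    measurable_gammaPDF (ae_of_all _ fun _ ↦ ENNReal.ofReal_lt_top)]
  simp [gammaPDF, ENNReal.toReal_ofReal (gammaPDFReal_nonneg ha hr _)]

lemma integral_gammaMeasure (ha : 0 < a) (hr : 0 < r) (g : ℝ → ℝ) :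
    ∫ x, g x ∂gammaMeasure a r = ∫ x, gammaPDFReal a r x * g x := by
  rw [gammaMeasure, integral_withDensity_eq_integral_toReal_smul
    measurable_gammaPDF (ae_of_all _ fun _ ↦ ENNReal.ofReal_lt_top)]
  simp [gammaPDF, ENNReal.toReal_ofReal (gammaPDFReal_nonneg ha hr _)]

lemma integrable_gammaPDFReal (ha : 0 < a) (hr : 0 < r) : Integrable (gammaPDFReal a r) := by
  have := isProbabilityMeasure_gammaMeasure ha hr
  simpa using (integrable_gammaMeasure_iff ha hr).1 (integrable_const (1 : ℝ))

lemma integral_gammaPDFReal (ha : 0 < a) (hr : 0 < r) : ∫ x, gammaPDFReal a r x = 1 := by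
  have := isProbabilityMeasure_gammaMeasure ha hr
  simpa using (integral_gammaMeasure ha hr fun _ ↦ (1 : ℝ)).symm

lemma gammaPDFReal_mul_rpow {p x : ℝ} (ha : 0 < a) (hr : 0 < r) (hap : 0 < a + p) (hx : x ≠ 0) :
    gammaPDFReal a r x * x ^ p = Gamma (a + p) / (Gamma a * r ^ p) * gammaPDFReal (a + p) r x := by
  rcases hx.lt_or_gt with hx | hx
  · simp [gammaPDFReal, not_le.2 hx]
  · have := (Gamma_pos_of_pos hap).ne'
    have := (Gamma_pos_of_pos ha).ne'
    simp only [gammaPDFReal, if_pos hx.le, show a + p - 1 = a - 1 + p by ring, rpow_add hx,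
      rpow_add hr]
    field_simp

lemma gammaPDFReal_mul_rpow_ae_eq {p : ℝ} (ha : 0 < a) (hr : 0 < r) (hap : 0 < a + p) :
    (fun x ↦ gammaPDFReal a r x * x ^ p) =ᵐ[volume]
      fun x ↦ Gamma (a + p) / (Gamma a * r ^ p) * gammaPDFReal (a + p) r x := by
  filter_upwards [Measure.ae_ne volume 0] with x hx using gammaPDFReal_mul_rpow ha hr hap hx

lemma integrable_rpow_gammaMeasure {p : ℝ} (ha : 0 < a) (hr : 0 < r) (hap : 0 < a + p) :
    Integrable (fun x ↦ x ^ p) (gammaMeasure a r) := by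
  rw [integrable_gammaMeasure_iff ha hr, integrable_congr (gammaPDFReal_mul_rpow_ae_eq ha hr hap)]
  exact (integrable_gammaPDFReal hap hr).const_mul _

lemma integral_rpow_gammaMeasure {p : ℝ} (ha : 0 < a) (hr : 0 < r) (hap : 0 < a + p) :
    ∫ x, x ^ p ∂gammaMeasure a r = Gamma (a + p) / (Gamma a * r ^ p) := by
  rw [integral_gammaMeasure ha hr, integral_congr_ae (gammaPDFReal_mul_rpow_ae_eq ha hr hap),
    integral_const_mul, integral_gammaPDFReal hap hr, mul_one]

end GammaMoments

section Ratio

variable {Ω : Type*} [MeasurableSpace Ω] {P : Measure Ω} {U V : Ω → ℝ} {a b r p : ℝ}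

lemma HasLaw.integrable_rpow_of_gamma (hU : HasLaw U (gammaMeasure a r) P) (ha : 0 < a)
    (hr : 0 < r) (hap : 0 < a + p) : Integrable (fun ω ↦ U ω ^ p) P :=
  (integrable_map_measure (g := fun x ↦ x ^ p) (by fun_prop) hU.aemeasurable).1
    (hU.map_eq ▸ integrable_rpow_gammaMeasure ha hr hap)

lemma HasLaw.integral_rpow_of_gamma (hU : HasLaw U (gammaMeasure a r) P) (ha : 0 < a)
    (hr : 0 < r) (hap : 0 < a + p) :
    ∫ ω, U ω ^ p ∂P = Gamma (a + p) / (Gamma a * r ^ p) := by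
  rw [← integral_rpow_gammaMeasure ha hr hap, ← hU.integral_comp (by fun_prop)]
  rfl

lemma IndepFun.rpow (hUV : IndepFun U V P) (p q : ℝ) :
    IndepFun (fun ω ↦ U ω ^ p) (fun ω ↦ V ω ^ q) P :=
  hUV.comp (φ := (· ^ p)) (ψ := (· ^ q)) (by fun_prop) (by fun_prop)

variable (hU : HasLaw U (gammaMeasure a r) P) (hV : HasLaw V (gammaMeasure b r) P)
  (hUV : IndepFun U V P) (ha : 0 < a) (hb : 0 < b) (hr : 0 < r) (hap : 0 < a + p)
  (hbp : 0 < b - p)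
include hU hV hUV ha hb hr hap hbp

lemma integrable_rpow_mul_rpow_neg_of_gamma :
    Integrable (fun ω ↦ U ω ^ p * V ω ^ (-p)) P :=
  (hUV.rpow p (-p)).integrable_mul
    (hU.integrable_rpow_of_gamma ha hr hap) (hV.integrable_rpow_of_gamma hb hr hbp)

lemma integral_rpow_mul_rpow_neg_of_gamma :
    ∫ ω, U ω ^ p * V ω ^ (-p) ∂P = Gamma (a + p) * Gamma (b - p) / (Gamma a * Gamma b) := by
  rw [(hUV.rpow p (-p)).integral_fun_mul_eq_mul_integral
    (hU.integrable_rpow_of_gamma ha hr hap).aestronglyMeasurable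
    (hV.integrable_rpow_of_gamma hb hr hbp).aestronglyMeasurable,
    hU.integral_rpow_of_gamma ha hr hap, hV.integral_rpow_of_gamma hb hr (by linarith)]
  have := (rpow_pos_of_pos hr p).ne'
  rw [rpow_neg hr.le, ← sub_eq_add_neg]
  field_simp

end Ratio

-- `E[F ^ p]` for `F ~ F(ν₁, ν₂)`; the paper's `M_p`.
noncomputable def fMoment (ν₁ ν₂ p : ℝ) : ℝ :=
  (ν₂ / ν₁) ^ p * (Gamma (ν₁ / 2 + p) * Gamma (ν₂ / 2 - p) / (Gamma (ν₁ / 2) * Gamma (ν₂ / 2)))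

lemma fMoment_pos {ν₁ ν₂ p : ℝ} (hν₁ : 0 < ν₁) (hν₂ : 0 < ν₂) (h₁ : 0 < ν₁ / 2 + p)
    (h₂ : 0 < ν₂ / 2 - p) : 0 < fMoment ν₁ ν₂ p := by
  have := Gamma_pos_of_pos h₁
  have := Gamma_pos_of_pos h₂
  have := Gamma_pos_of_pos (half_pos hν₁)
  have := Gamma_pos_of_pos (half_pos hν₂)
  unfold fMoment
  positivity

-- The paper's `Σ̂_k`, as a function of `s₁ / s₂`.
noncomputable def sigmaHat (ν₁ ν₂ : ℝ) (k : ℕ) (x : ℝ) : ℝ :=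
  ∑ j ∈ Finset.range (k + 1), (fMoment ν₁ ν₂ (j / 2))⁻¹ * x ^ j

lemma measurable_sigmaHat (ν₁ ν₂ : ℝ) (k : ℕ) : Measurable (sigmaHat ν₁ ν₂ k) := by
  unfold sigmaHat
  fun_prop

section FStatistic

variable {Ω : Type*} [MeasurableSpace Ω] {P : Measure Ω} {U V : Ω → ℝ} {ν₁ ν₂ p : ℝ}
  (hU : HasLaw U (chiSquareMeasure ν₁) P) (hV : HasLaw V (chiSquareMeasure ν₂) P)
  (hUV : IndepFun U V P) (hU₀ : ∀ ω, 0 ≤ U ω) (hV₀ : ∀ ω, 0 ≤ V ω) (hν₁ : 0 < ν₁)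
  (hν₂ : 0 < ν₂) (h₁ : 0 < ν₁ / 2 + p) (h₂ : 0 < ν₂ / 2 - p)
include hU hV hUV hU₀ hV₀ hν₁ hν₂ h₁ h₂

lemma integrable_fStatistic_rpow : Integrable (fun ω ↦ (U ω / ν₁ / (V ω / ν₂)) ^ p) P := by
  simp_rw [fStatistic_rpow (hU₀ _) (hV₀ _) hν₁.le hν₂.le]
  exact (integrable_rpow_mul_rpow_neg_of_gamma hU hV hUV (half_pos hν₁) (half_pos hν₂)
    one_half_pos h₁ h₂).const_mul _

lemma integral_fStatistic_rpow : ∫ ω, (U ω / ν₁ / (V ω / ν₂)) ^ p ∂P = fMoment ν₁ ν₂ p := by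
  simp_rw [fStatistic_rpow (hU₀ _) (hV₀ _) hν₁.le hν₂.le]
  rw [integral_const_mul, integral_rpow_mul_rpow_neg_of_gamma hU hV hUV (half_pos hν₁)
    (half_pos hν₂) one_half_pos h₁ h₂, fMoment]

end FStatistic

section SampleStdDev

variable {Ω : Type*} [MeasurableSpace Ω] {P : Measure Ω} {U V s₁ s₂ : Ω → ℝ}
  {ν₁ ν₂ σ₁ σ₂ : ℝ}
  (hU : HasLaw U (chiSquareMeasure ν₁) P) (hV : HasLaw V (chiSquareMeasure ν₂) P)
  (hUV : IndepFun U V P) (hν₁ : 0 < ν₁) (hν₂ : 0 < ν₂) (hσ₁ : 0 < σ₁) (hσ₂ : 0 < σ₂)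
  (hs₁₀ : ∀ ω, 0 ≤ s₁ ω) (hs₂₀ : ∀ ω, 0 ≤ s₂ ω)
  (hs₁ : ∀ ω, s₁ ω ^ 2 = σ₁ ^ 2 * U ω / ν₁) (hs₂ : ∀ ω, s₂ ω ^ 2 = σ₂ ^ 2 * V ω / ν₂)
include hU hV hUV hν₁ hν₂ hσ₁ hσ₂ hs₁₀ hs₂₀ hs₁ hs₂

lemma integrable_div_pow_of_chiSquare {j : ℕ} (hj : (j : ℝ) < ν₂) :
    Integrable (fun ω ↦ (s₁ ω / s₂ ω) ^ j) P := by
  have hU₀ ω := nonneg_of_sq_eq_mul_div hσ₁ hν₁ (hs₁ ω)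
  have hV₀ ω := nonneg_of_sq_eq_mul_div hσ₂ hν₂ (hs₂ ω)
  simp_rw [div_pow_eq_mul_fStatistic_rpow (hs₁₀ _) (hs₂₀ _) hσ₁.le hσ₂.le
    (div_nonneg (hU₀ _) hν₁.le) (div_nonneg (hV₀ _) hν₂.le) (hs₁ _) (hs₂ _)]
  exact (integrable_fStatistic_rpow hU hV hUV hU₀ hV₀ hν₁ hν₂ (by positivity)
    (by linarith)).const_mul _

lemma integral_div_pow_of_chiSquare {j : ℕ} (hj : (j : ℝ) < ν₂) :
    ∫ ω, (s₁ ω / s₂ ω) ^ j ∂P = fMoment ν₁ ν₂ (j / 2) * (σ₁ / σ₂) ^ j := by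
  have hU₀ ω := nonneg_of_sq_eq_mul_div hσ₁ hν₁ (hs₁ ω)
  have hV₀ ω := nonneg_of_sq_eq_mul_div hσ₂ hν₂ (hs₂ ω)
  simp_rw [div_pow_eq_mul_fStatistic_rpow (hs₁₀ _) (hs₂₀ _) hσ₁.le hσ₂.le
    (div_nonneg (hU₀ _) hν₁.le) (div_nonneg (hV₀ _) hν₂.le) (hs₁ _) (hs₂ _)]
  rw [integral_const_mul, integral_fStatistic_rpow hU hV hUV hU₀ hV₀ hν₁ hν₂ (by positivity)
    (by linarith), mul_comm]

variable {k : ℕ} (hk : (k : ℝ) < ν₂)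
include hk

lemma integrable_sigmaHat : Integrable (fun ω ↦ sigmaHat ν₁ ν₂ k (s₁ ω / s₂ ω)) P :=
  integrable_finsetSum _ fun _ hj ↦ (integrable_div_pow_of_chiSquare hU hV hUV hν₁ hν₂ hσ₁ hσ₂
    hs₁₀ hs₂₀ hs₁ hs₂ (cast_lt_of_mem_range_succ hj hk)).const_mul _

lemma integral_sigmaHat :
    ∫ ω, sigmaHat ν₁ ν₂ k (s₁ ω / s₂ ω) ∂P = ∑ j ∈ Finset.range (k + 1), (σ₁ / σ₂) ^ j := by
  simp only [sigmaHat]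
  rw [integral_finsetSum _ fun _ hj ↦ (integrable_div_pow_of_chiSquare hU hV hUV hν₁ hν₂ hσ₁ hσ₂
    hs₁₀ hs₂₀ hs₁ hs₂ (cast_lt_of_mem_range_succ hj hk)).const_mul _]
  refine Finset.sum_congr rfl fun j hj ↦ ?_
  have hj := cast_lt_of_mem_range_succ hj hk
  rw [integral_const_mul, integral_div_pow_of_chiSquare hU hV hUV hν₁ hν₂ hσ₁ hσ₂ hs₁₀ hs₂₀ hs₁
    hs₂ hj, inv_mul_cancel_left₀ (fMoment_pos hν₁ hν₂ (by positivity) (by linarith)).ne']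

end SampleStdDev

section Changepoint

variable {Ω : Type*} [MeasurableSpace Ω] {P : Measure Ω} {X₁ X₂ W : Ω → ℝ}

lemma IndepFun.fst_sub_snd (hXW : IndepFun (fun ω ↦ (X₁ ω, X₂ ω)) W P) :
    IndepFun (fun ω ↦ X₁ ω - X₂ ω) W P :=
  hXW.comp (φ := fun x : ℝ × ℝ ↦ x.1 - x.2) (ψ := id) (by fun_prop) measurable_id

variable (hX₁ : Integrable X₁ P) (hX₂ : Integrable X₂ P) (hW : Integrable W P)
  (hXW : IndepFun (fun ω ↦ (X₁ ω, X₂ ω)) W P)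
include hX₁ hX₂ hW hXW

lemma integrable_add_sub_mul_of_indepFun :
    Integrable (fun ω ↦ X₂ ω + (X₁ ω - X₂ ω) * W ω) P :=
  hX₂.add (hXW.fst_sub_snd.integrable_mul (hX₁.sub hX₂) hW)

lemma integral_add_sub_mul_of_indepFun :
    ∫ ω, (X₂ ω + (X₁ ω - X₂ ω) * W ω) ∂P =
      ∫ ω, X₂ ω ∂P + (∫ ω, X₁ ω ∂P - ∫ ω, X₂ ω ∂P) * ∫ ω, W ω ∂P := by
  have hmul : Integrable (fun ω ↦ (X₁ ω - X₂ ω) * W ω) P :=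
    hXW.fst_sub_snd.integrable_mul (hX₁.sub hX₂) hW
  rw [integral_add hX₂ hmul,
    hXW.fst_sub_snd.integral_fun_mul_eq_mul_integral (hX₁.sub hX₂).aestronglyMeasurable
      hW.aestronglyMeasurable, integral_sub hX₁ hX₂]

end Changepoint

end ProbabilityTheory

open ProbabilityTheory

theorem stmt13_general {Ω : Type*} [MeasurableSpace Ω] (P : Measure Ω)
    (n1 n2 : ℕ) (hn1 : 2 ≤ n1) (hn2 : 2 ≤ n2)
    (σ1 σ2 : ℝ) (hσ1 : 0 < σ1) (hσ2 : 0 < σ2)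
    (U V : Ω → ℝ)
    (hU : Measure.map U P = chiSquareMeasure ((n1 : ℝ) - 1))
    (hV : Measure.map V P = chiSquareMeasure ((n2 : ℝ) - 1))
    (hUV : IndepFun U V P)
    (s1 s2 : Ω → ℝ)
    (hs1_nonneg : ∀ ω, 0 ≤ s1 ω) (hs2_nonneg : ∀ ω, 0 ≤ s2 ω)
    (hs1 : ∀ ω, s1 ω ^ 2 = σ1 ^ 2 * U ω / ((n1 : ℝ) - 1))
    (hs2 : ∀ ω, s2 ω ^ 2 = σ2 ^ 2 * V ω / ((n2 : ℝ) - 1))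
    (k : ℕ) (hk : k < n2 - 1)
    (M : ℕ → ℝ)
    (hM : ∀ j : ℕ, M j =
      (((n2 : ℝ) - 1) / ((n1 : ℝ) - 1)) ^ ((j : ℝ) / 2) *
        (Real.Gamma (((n1 : ℝ) + j - 1) / 2) * Real.Gamma (((n2 : ℝ) - j - 1) / 2) /
          (Real.Gamma (((n1 : ℝ) - 1) / 2) * Real.Gamma (((n2 : ℝ) - 1) / 2))))
    (Shat : Ω → ℝ)
    (hShat : ∀ ω, Shat ω = ∑ j ∈ Finset.range (k + 1), (M j)⁻¹ * (s1 ω / s2 ω) ^ j) :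
    Integrable Shat P ∧
      ∫ ω, Shat ω ∂P = ∑ j ∈ Finset.range (k + 1), (σ1 / σ2) ^ j ∧
      (σ1 ≠ σ2 →
        ∫ ω, Shat ω ∂P = (1 - (σ1 / σ2) ^ (k + 1)) / (1 - σ1 / σ2)) ∧
      (∀ (μ1 μ2 : ℝ) (X1 X2 : Ω → ℝ),
        Integrable X1 P → Integrable X2 P →
        ∫ ω, X1 ω ∂P = μ1 → ∫ ω, X2 ω ∂P = μ2 →
        IndepFun (fun ω => (X1 ω, X2 ω)) (fun ω => (s1 ω, s2 ω)) P →
        σ1 ≠ σ2 →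
          Integrable (fun ω => X2 ω + (X1 ω - X2 ω) * Shat ω) P ∧
            ∫ ω, (X2 ω + (X1 ω - X2 ω) * Shat ω) ∂P =
              μ2 + (μ1 - μ2) * ((1 - (σ1 / σ2) ^ (k + 1)) / (1 - σ1 / σ2))) := by
  have hν₁ : (0 : ℝ) < n1 - 1 := by linarith [show (2 : ℝ) ≤ n1 by exact_mod_cast hn1]
  have hν₂ : (0 : ℝ) < n2 - 1 := by linarith [show (2 : ℝ) ≤ n2 by exact_mod_cast hn2]
  have hk' : (k : ℝ) < n2 - 1 := by
    rw [lt_sub_iff_add_lt]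
    exact_mod_cast (by omega : k + 1 < n2)
  obtain rfl : M = fun j : ℕ ↦ fMoment (n1 - 1) (n2 - 1) ((j : ℝ) / 2) :=
    funext fun j ↦ by rw [hM, fMoment]; ring_nf
  obtain rfl : Shat = fun ω ↦ sigmaHat (n1 - 1) (n2 - 1) k (s1 ω / s2 ω) := funext hShat
  have := isProbabilityMeasure_chiSquareMeasure hν₁
  have := isProbabilityMeasure_chiSquareMeasure hν₂
  have hint := integrable_sigmaHat (hasLaw_of_map_eq hU) (hasLaw_of_map_eq hV) hUV hν₁ hν₂ hσ1
    hσ2 hs1_nonneg hs2_nonneg hs1 hs2 hk'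
  have hmean := integral_sigmaHat (hasLaw_of_map_eq hU) (hasLaw_of_map_eq hV) hUV hν₁ hν₂ hσ1
    hσ2 hs1_nonneg hs2_nonneg hs1 hs2 hk'
  have hgeom (hne : σ1 ≠ σ2) :=
    geom_sum_eq_one_sub_div (mt (div_eq_one_iff_eq hσ2.ne').1 hne) (k + 1)
  refine ⟨hint, hmean, fun hne ↦ hmean.trans (hgeom hne), ?_⟩
  intro μ1 μ2 X1 X2 hX1 hX2 hμ1 hμ2 hX_indep hne
  have hXS := hX_indep.comp measurable_id
    ((measurable_sigmaHat ((n1 : ℝ) - 1) (n2 - 1) k).comp (measurable_fst.div measurable_snd))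
  refine ⟨integrable_add_sub_mul_of_indepFun hX1 hX2 hint hXS, ?_⟩
  rw [integral_add_sub_mul_of_indepFun hX1 hX2 hint hXS, hμ1, hμ2, hmean, hgeom hne]

/-- With `U ~ χ²_{n1-1}`, `V ~ χ²_{n2-1}` independent, sample standard deviations
`s1, s2 ≥ 0` with `s1² = σ1² U/(n1-1)`, `s2² = σ2² V/(n2-1)`, and
`Σ̂_k = ∑_{j=0}^k M_{j/2}⁻¹ (s1/s2)^j` for `0 ≤ k < n2 - 1`,
`Σ̂_k` is integrable with `E[Σ̂_k] = ∑_{j=0}^k (σ1/σ2)^j`, which equals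
`(1 - (σ1/σ2)^(k+1))/(1 - σ1/σ2)` when `σ1 ≠ σ2`; and if moreover `X̄1, X̄2` are
integrable with means `μ1, μ2` and `(X̄1, X̄2)` is independent of `(s1, s2)`, then
`Â_k = X̄2 + (X̄1 - X̄2) Σ̂_k` has
`E[Â_k] = μ2 + (μ1 - μ2)(1 - (σ1/σ2)^(k+1))/(1 - σ1/σ2)`. -/
theorem stmt13 {Ω : Type*} [MeasurableSpace Ω] (P : Measure Ω) [IsProbabilityMeasure P]
    (n1 n2 : ℕ) (hn1 : 2 ≤ n1) (hn2 : 2 ≤ n2)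
    (σ1 σ2 : ℝ) (hσ1 : 0 < σ1) (hσ2 : 0 < σ2)
    (U V : Ω → ℝ)
    (hU : Measure.map U P = chiSquareMeasure ((n1 : ℝ) - 1))
    (hV : Measure.map V P = chiSquareMeasure ((n2 : ℝ) - 1))
    (hUV : IndepFun U V P)
    (s1 s2 : Ω → ℝ)
    (hs1_nonneg : ∀ ω, 0 ≤ s1 ω) (hs2_nonneg : ∀ ω, 0 ≤ s2 ω)
    (hs1 : ∀ ω, s1 ω ^ 2 = σ1 ^ 2 * U ω / ((n1 : ℝ) - 1))
    (hs2 : ∀ ω, s2 ω ^ 2 = σ2 ^ 2 * V ω / ((n2 : ℝ) - 1))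
    (k : ℕ) (hk : k < n2 - 1)
    (M : ℕ → ℝ)
    (hM : ∀ j : ℕ, M j =
      (((n2 : ℝ) - 1) / ((n1 : ℝ) - 1)) ^ ((j : ℝ) / 2) *
        (Real.Gamma (((n1 : ℝ) + j - 1) / 2) * Real.Gamma (((n2 : ℝ) - j - 1) / 2) /
          (Real.Gamma (((n1 : ℝ) - 1) / 2) * Real.Gamma (((n2 : ℝ) - 1) / 2))))
    (Shat : Ω → ℝ)
    (hShat : ∀ ω, Shat ω = ∑ j ∈ Finset.range (k + 1), (M j)⁻¹ * (s1 ω / s2 ω) ^ j) :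
    Integrable Shat P ∧
      ∫ ω, Shat ω ∂P = ∑ j ∈ Finset.range (k + 1), (σ1 / σ2) ^ j ∧
      (σ1 ≠ σ2 →
        ∫ ω, Shat ω ∂P = (1 - (σ1 / σ2) ^ (k + 1)) / (1 - σ1 / σ2)) ∧
      (∀ (μ1 μ2 : ℝ) (X1 X2 : Ω → ℝ),
        Integrable X1 P → Integrable X2 P →
        ∫ ω, X1 ω ∂P = μ1 → ∫ ω, X2 ω ∂P = μ2 →
        IndepFun (fun ω => (X1 ω, X2 ω)) (fun ω => (s1 ω, s2 ω)) P →
        σ1 ≠ σ2 →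
          Integrable (fun ω => X2 ω + (X1 ω - X2 ω) * Shat ω) P ∧
            ∫ ω, (X2 ω + (X1 ω - X2 ω) * Shat ω) ∂P =
              μ2 + (μ1 - μ2) * ((1 - (σ1 / σ2) ^ (k + 1)) / (1 - σ1 / σ2))) :=
  stmt13_general P n1 n2 hn1 hn2 σ1 σ2 hσ1 hσ2 U V hU hV hUV s1 s2 hs1_nonneg hs2_nonneg hs1 hs2 k
    hk M hM Shat hShat
end
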